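/- Conversely, if the vector fields L₀ = ∂_w − Θ_{xy} ∂_y + Θ_{yy} ∂_x − λ ∂_y + f_y ∂_λ and L₁ = ∂_z + Θ_{xx} ∂_y − Θ_{xy} ∂_x + λ ∂_x − f_x ∂_λ commute identically in (w,z,x,y,λ), then f_{xw} + f_{yz} + Θ_{yy} f_{xx} + Θ_{xx} f_{yy} − 2Θ_{xy} f_{xy} = 0 and the quantity Θ_{wx} + Θ_{zy} + Θ_{xx}Θ_{yy} − Θ_{xy}² − f has vanishing x- and y-derivatives. -/

import Mathlib

/- Coordinates: on ℝ⁴, (w,z,x,y) = indices (0,1,2,3); on ℝ⁵ additionally λ = index 4. -/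

noncomputable def pd {n : ℕ} (i : Fin n) (f : (Fin n → ℝ) → ℝ) : (Fin n → ℝ) → ℝ :=
  fun p => fderiv ℝ f p (Pi.single i 1)

def lift4 (f : (Fin 4 → ℝ) → ℝ) : (Fin 5 → ℝ) → ℝ :=
  fun q => f ![q 0, q 1, q 2, q 3]

/-- L₀ = ∂_w − Θ_{xy} ∂_y + Θ_{yy} ∂_x − λ ∂_y + f_y ∂_λ -/
noncomputable def L0 (Θ f : (Fin 4 → ℝ) → ℝ) (g : (Fin 5 → ℝ) → ℝ) : (Fin 5 → ℝ) → ℝ :=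
  fun q => pd 0 g q - lift4 (pd 2 (pd 3 Θ)) q * pd 3 g q + lift4 (pd 3 (pd 3 Θ)) q * pd 2 g q
    - q 4 * pd 3 g q + lift4 (pd 3 f) q * pd 4 g q

/-- L₁ = ∂_z + Θ_{xx} ∂_y − Θ_{xy} ∂_x + λ ∂_x − f_x ∂_λ -/
noncomputable def L1 (Θ f : (Fin 4 → ℝ) → ℝ) (g : (Fin 5 → ℝ) → ℝ) : (Fin 5 → ℝ) → ℝ :=
  fun q => pd 1 g q + lift4 (pd 2 (pd 2 Θ)) q * pd 3 g q - lift4 (pd 2 (pd 3 Θ)) q * pd 2 g q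
    + q 4 * pd 2 g q - lift4 (pd 2 f) q * pd 4 g q

noncomputable def π45 : (Fin 5 → ℝ) →L[ℝ] (Fin 4 → ℝ) :=
  ContinuousLinearMap.pi fun i : Fin 4 => ContinuousLinearMap.proj (Fin.castSucc i)

lemma lift4_eq (f : (Fin 4 → ℝ) → ℝ) : lift4 f = f ∘ π45 := by
  funext q
  have : (![q 0, q 1, q 2, q 3] : Fin 4 → ℝ) = π45 q := by
    funext i; fin_cases i <;> rfl
  simp [lift4, this, π45, Function.comp]

lemma pd_contDiff {n : ℕ} (i : Fin n) {f : (Fin n → ℝ) → ℝ} (hf : ContDiff ℝ (⊤ : ℕ∞) f) :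
    ContDiff ℝ (⊤ : ℕ∞) (pd i f) := by
  have h1 : ContDiff ℝ (⊤ : ℕ∞) (fderiv ℝ f) := hf.fderiv_right (by simp)
  exact (ContinuousLinearMap.apply ℝ ℝ (Pi.single i 1)).contDiff.comp h1

lemma lift4_contDiff {f : (Fin 4 → ℝ) → ℝ} (hf : ContDiff ℝ (⊤ : ℕ∞) f) :
    ContDiff ℝ (⊤ : ℕ∞) (lift4 f) := by
  rw [lift4_eq]; exact hf.comp π45.contDiff

lemma pd_symm {n : ℕ} (i j : Fin n) {f : (Fin n → ℝ) → ℝ} (hf : ContDiff ℝ (⊤ : ℕ∞) f)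
    (p : Fin n → ℝ) : pd i (pd j f) p = pd j (pd i f) p := by
  have hs : IsSymmSndFDerivAt ℝ f p := (hf.contDiffAt).isSymmSndFDerivAt (by rw [minSmoothness_of_isRCLikeNormedField]; exact WithTop.coe_le_coe.mpr le_top)
  have hdf : DifferentiableAt ℝ (fderiv ℝ f) p :=
    ((hf.fderiv_right (m := 1) (WithTop.coe_le_coe.mpr le_top)).differentiable one_ne_zero).differentiableAt
  have key : ∀ v w : Fin n → ℝ,
      fderiv ℝ (fun x => fderiv ℝ f x v) p w = fderiv ℝ (fderiv ℝ f) p w v := by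
    intro v w
    have : (fun x => fderiv ℝ f x v) =
        (ContinuousLinearMap.apply ℝ ℝ v) ∘ (fderiv ℝ f) := rfl
    rw [this, fderiv_comp p (ContinuousLinearMap.apply ℝ ℝ v).differentiableAt hdf]
    simp
  have e : ∀ v, pd (n:=n) v f = fun x => fderiv ℝ f x (Pi.single v 1) := fun _ => rfl
  simp only [pd, e]
  rw [key, key, hs]

section algebra
variable {n : ℕ} (i : Fin n) {F G : (Fin n → ℝ) → ℝ}

lemma pd_add (hF : Differentiable ℝ F) (hG : Differentiable ℝ G) :
    pd i (fun x => F x + G x) = fun q => pd i F q + pd i G q := by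
  funext q; simp only [pd]; rw [fderiv_fun_add hF.differentiableAt hG.differentiableAt]; rfl

lemma pd_sub (hF : Differentiable ℝ F) (hG : Differentiable ℝ G) :
    pd i (fun x => F x - G x) = fun q => pd i F q - pd i G q := by
  funext q; simp only [pd]; rw [fderiv_fun_sub hF.differentiableAt hG.differentiableAt]; rfl

lemma pd_mul (hF : Differentiable ℝ F) (hG : Differentiable ℝ G) :
    pd i (fun x => F x * G x) = fun q => pd i F q * G q + F q * pd i G q := by
  funext q; simp only [pd]
  rw [fderiv_fun_mul hF.differentiableAt hG.differentiableAt]; simp; ring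

lemma pd_neg : pd i (fun x => -F x) = fun q => -pd i F q := by
  funext q; simp only [pd]; rw [fderiv_fun_neg]; rfl

lemma pd_pow2 (hF : Differentiable ℝ F) :
    pd i (fun x => F x ^ 2) = fun q => 2 * F q * pd i F q := by
  have : (fun x => F x ^ 2) = fun x => F x * F x := by funext x; ring
  rw [this, pd_mul i hF hF]; funext q; ring

lemma pd_coord (j : Fin n) : pd i (fun x => x j) = fun _ => (Pi.single i 1 : Fin n → ℝ) j := by
  funext q
  have : (fun x : Fin n → ℝ => x j) = (ContinuousLinearMap.proj j :
      (Fin n → ℝ) →L[ℝ] ℝ) := rfl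
  simp only [pd, this, ContinuousLinearMap.fderiv]; rfl
end algebra

lemma pd_lift4 (i : Fin 4) {A : (Fin 4 → ℝ) → ℝ} (hA : Differentiable ℝ A) :
    pd i.castSucc (lift4 A) = lift4 (pd i A) := by
  funext q
  have h1 : π45 (Pi.single i.castSucc (1:ℝ)) = Pi.single i 1 := by
    funext j
    simp only [π45, ContinuousLinearMap.pi_apply, ContinuousLinearMap.proj_apply]
    by_cases h : j = i
    · subst h; simp
    · rw [Pi.single_eq_of_ne h, Pi.single_eq_of_ne]
      exact fun hc => h (Fin.castSucc_injective _ hc)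
  have h2 : lift4 (pd i A) q = pd i A (π45 q) := by rw [lift4_eq]; rfl
  rw [lift4_eq, pd, fderiv_comp q (hA.differentiableAt) π45.differentiableAt,
    π45.fderiv, h2, ContinuousLinearMap.coe_comp', Function.comp_apply, h1, pd]

lemma pd4_lift4 {A : (Fin 4 → ℝ) → ℝ} (hA : Differentiable ℝ A) :
    pd 4 (lift4 A) = fun _ => 0 := by
  funext q
  have h1 : π45 (Pi.single (4 : Fin 5) (1:ℝ)) = 0 := by
    funext j
    simp only [π45, ContinuousLinearMap.pi_apply, ContinuousLinearMap.proj_apply]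
    rw [Pi.single_eq_of_ne]; · rfl
    · exact Fin.ne_of_lt j.castSucc_lt_last
  rw [lift4_eq, pd, fderiv_comp q (hA.differentiableAt) π45.differentiableAt,
    π45.fderiv, ContinuousLinearMap.coe_comp', Function.comp_apply, h1, map_zero]

lemma pd0_lift4 {A : (Fin 4 → ℝ) → ℝ} (hA : Differentiable ℝ A) :
    pd 0 (lift4 A) = lift4 (pd 0 A) := by
  have : ((0 : Fin 4).castSucc) = (0 : Fin 5) := by decide
  rw [← this, pd_lift4 0 hA]

lemma pd1_lift4 {A : (Fin 4 → ℝ) → ℝ} (hA : Differentiable ℝ A) :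
    pd 1 (lift4 A) = lift4 (pd 1 A) := by
  have : ((1 : Fin 4).castSucc) = (1 : Fin 5) := by decide
  rw [← this, pd_lift4 1 hA]

lemma pd2_lift4 {A : (Fin 4 → ℝ) → ℝ} (hA : Differentiable ℝ A) :
    pd 2 (lift4 A) = lift4 (pd 2 A) := by
  have : ((2 : Fin 4).castSucc) = (2 : Fin 5) := by decide
  rw [← this, pd_lift4 2 hA]

lemma pd3_lift4 {A : (Fin 4 → ℝ) → ℝ} (hA : Differentiable ℝ A) :
    pd 3 (lift4 A) = lift4 (pd 3 A) := by
  have : ((3 : Fin 4).castSucc) = (3 : Fin 5) := by decide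
  rw [← this, pd_lift4 3 hA]

/-- extension of a point of ℝ⁴ to ℝ⁵ with λ = 0 -/
def ext5 (p : Fin 4 → ℝ) : Fin 5 → ℝ := ![p 0, p 1, p 2, p 3, 0]

lemma lift4_ext5 (h : (Fin 4 → ℝ) → ℝ) (p : Fin 4 → ℝ) : lift4 h (ext5 p) = h p := by
  have : (![ext5 p 0, ext5 p 1, ext5 p 2, ext5 p 3] : Fin 4 → ℝ) = p := by
    funext i; fin_cases i <;> rfl
  rw [lift4, this]

lemma ext5_four (p : Fin 4 → ℝ) : ext5 p 4 = 0 := rfl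

/-- Conversely, if [L₀, L₁] vanishes identically (as an operator on smooth functions on
ℝ⁵), then f satisfies the second Dunajski equation and the quantity
Θ_{wx} + Θ_{zy} + Θ_{xx}Θ_{yy} − Θ_{xy}² − f has vanishing x- and y-derivatives. -/
theorem stmt_1 (Θ f : (Fin 4 → ℝ) → ℝ)
    (hΘ : ContDiff ℝ (⊤ : ℕ∞) Θ) (hf : ContDiff ℝ (⊤ : ℕ∞) f)
    (hcomm : ∀ g : (Fin 5 → ℝ) → ℝ, ContDiff ℝ (⊤ : ℕ∞) g →
      ∀ q : Fin 5 → ℝ, L0 Θ f (L1 Θ f g) q - L1 Θ f (L0 Θ f g) q = 0) :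
    (∀ p : Fin 4 → ℝ,
      pd 2 (pd 0 f) p + pd 3 (pd 1 f) p
        + pd 3 (pd 3 Θ) p * pd 2 (pd 2 f) p + pd 2 (pd 2 Θ) p * pd 3 (pd 3 f) p
        - 2 * pd 2 (pd 3 Θ) p * pd 2 (pd 3 f) p = 0) ∧
    (∀ p : Fin 4 → ℝ,
      pd 2 (fun r => pd 0 (pd 2 Θ) r + pd 1 (pd 3 Θ) r
        + pd 2 (pd 2 Θ) r * pd 3 (pd 3 Θ) r - (pd 2 (pd 3 Θ) r) ^ 2 - f r) p = 0) ∧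
    (∀ p : Fin 4 → ℝ,
      pd 3 (fun r => pd 0 (pd 2 Θ) r + pd 1 (pd 3 Θ) r
        + pd 2 (pd 2 Θ) r * pd 3 (pd 3 Θ) r - (pd 2 (pd 3 Θ) r) ^ 2 - f r) p = 0) := by
  -- notation
  set a : (Fin 4 → ℝ) → ℝ := pd 3 (pd 3 Θ) with ha_def
  set b : (Fin 4 → ℝ) → ℝ := pd 2 (pd 3 Θ) with hb_def
  set c : (Fin 4 → ℝ) → ℝ := pd 2 (pd 2 Θ) with hc_def
  set fx : (Fin 4 → ℝ) → ℝ := pd 2 f with hfx_def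
  set fy : (Fin 4 → ℝ) → ℝ := pd 3 f with hfy_def
  -- smoothness facts
  have ha : ContDiff ℝ (⊤ : ℕ∞) a := pd_contDiff _ (pd_contDiff _ hΘ)
  have hb : ContDiff ℝ (⊤ : ℕ∞) b := pd_contDiff _ (pd_contDiff _ hΘ)
  have hc : ContDiff ℝ (⊤ : ℕ∞) c := pd_contDiff _ (pd_contDiff _ hΘ)
  have hfx : ContDiff ℝ (⊤ : ℕ∞) fx := pd_contDiff _ hf
  have hfy : ContDiff ℝ (⊤ : ℕ∞) fy := pd_contDiff _ hf
  have hcoord : ∀ j : Fin 5, ContDiff ℝ (⊤ : ℕ∞) (fun q : Fin 5 → ℝ => q j) := fun j =>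
    (ContinuousLinearMap.proj j : (Fin 5 → ℝ) →L[ℝ] ℝ).contDiff
  have hc4d : Differentiable ℝ (fun q : Fin 5 → ℝ => q 4) := (hcoord 4).differentiable (by simp)
  -- derivatives of lifted functions are lifted derivatives (packaged)
  have dl : ∀ {A : (Fin 4 → ℝ) → ℝ}, ContDiff ℝ (⊤ : ℕ∞) A → Differentiable ℝ (lift4 A) :=
    fun hA => (lift4_contDiff hA).differentiable (by simp)
  -- closed forms of L0, L1 on coordinate functions
  have e10 : L0 Θ f (fun q : Fin 5 → ℝ => q 2) = lift4 a := by
    funext q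
    simp only [L0, pd_coord]
    simp (config := { decide := true }) [Pi.single_apply]
    try simp only [← ha_def, ← hb_def, ← hc_def, ← hfx_def, ← hfy_def]
    try ring
  have e11 : L1 Θ f (fun q : Fin 5 → ℝ => q 2) = fun q => q 4 - lift4 b q := by
    funext q
    simp only [L1, pd_coord]
    simp (config := { decide := true }) [Pi.single_apply]
    try simp only [← ha_def, ← hb_def, ← hc_def, ← hfx_def, ← hfy_def]
    try ring
  have e20 : L0 Θ f (fun q : Fin 5 → ℝ => q 3) = fun q => -lift4 b q - q 4 := by
    funext q
    simp only [L0, pd_coord]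
    simp (config := { decide := true }) [Pi.single_apply]
    try simp only [← ha_def, ← hb_def, ← hc_def, ← hfx_def, ← hfy_def]
    try ring
  have e21 : L1 Θ f (fun q : Fin 5 → ℝ => q 3) = lift4 c := by
    funext q
    simp only [L1, pd_coord]
    simp (config := { decide := true }) [Pi.single_apply]
    try simp only [← ha_def, ← hb_def, ← hc_def, ← hfx_def, ← hfy_def]
    try ring
  have e30 : L0 Θ f (fun q : Fin 5 → ℝ => q 4) = lift4 fy := by
    funext q
    simp only [L0, pd_coord]
    simp (config := { decide := true }) [Pi.single_apply]
    try simp only [← ha_def, ← hb_def, ← hc_def, ← hfx_def, ← hfy_def]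
    try ring
  have e31 : L1 Θ f (fun q : Fin 5 → ℝ => q 4) = fun q => -lift4 fx q := by
    funext q
    simp only [L1, pd_coord]
    simp (config := { decide := true }) [Pi.single_apply]
    try simp only [← ha_def, ← hb_def, ← hc_def, ← hfx_def, ← hfy_def]
    try ring
  -- symmetric derivative identities
  have s1 : pd 3 (pd 2 Θ) = pd 2 (pd 3 Θ) := funext fun p => pd_symm 3 2 hΘ p
  have s2 : pd 2 a = pd 3 b := funext fun p => pd_symm 2 3 (pd_contDiff _ hΘ) p
  have s3 : pd 3 c = pd 2 b := by
    funext p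
    have h1 : pd 3 c p = pd 2 (pd 3 (pd 2 Θ)) p := pd_symm 3 2 (pd_contDiff _ hΘ) p
    rw [h1, s1, hb_def]
  have s4 : pd 3 fx = pd 2 fy := funext fun p => pd_symm 3 2 hf p
  -- the three commutator equations, evaluated at ext5 p
  -- equation from g = x-coordinate (gives the ∂_y statement)
  have Ey : ∀ p : Fin 4 → ℝ,
      (0 - lift4 (pd 0 b) (ext5 p)) - b p * (0 - lift4 (pd 3 b) (ext5 p))
        + a p * (0 - lift4 (pd 2 b) (ext5 p)) - 0 * (0 - lift4 (pd 3 b) (ext5 p))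
        + fy p * (1 - 0)
      - (lift4 (pd 1 a) (ext5 p) + c p * lift4 (pd 3 a) (ext5 p)
        - b p * lift4 (pd 2 a) (ext5 p) + 0 * lift4 (pd 2 a) (ext5 p)
        - fx p * 0) = 0 := by
    intro p
    have H := hcomm (fun q => q 2) (hcoord 2) (ext5 p)
    rw [e10, e11] at H
    have hL0 : L0 Θ f (fun q => q 4 - lift4 b q) (ext5 p)
        = (0 - lift4 (pd 0 b) (ext5 p)) - b p * (0 - lift4 (pd 3 b) (ext5 p))
          + a p * (0 - lift4 (pd 2 b) (ext5 p)) - 0 * (0 - lift4 (pd 3 b) (ext5 p))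
          + fy p * (1 - 0) := by
      simp only [L0, pd_sub _ hc4d (dl hb), pd_coord, pd0_lift4 (hb.differentiable (by simp)),
        pd1_lift4 (hb.differentiable (by simp)), pd2_lift4 (hb.differentiable (by simp)),
        pd3_lift4 (hb.differentiable (by simp)), pd4_lift4 (hb.differentiable (by simp))]
      simp (config := { decide := true }) [Pi.single_apply, lift4_ext5, ext5_four, ← ha_def, ← hb_def, ← hc_def, ← hfx_def, ← hfy_def]
      try ring
    have hL1 : L1 Θ f (lift4 a) (ext5 p)
        = lift4 (pd 1 a) (ext5 p) + c p * lift4 (pd 3 a) (ext5 p)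
          - b p * lift4 (pd 2 a) (ext5 p) + 0 * lift4 (pd 2 a) (ext5 p) - fx p * 0 := by
      simp only [L1, pd1_lift4 (ha.differentiable (by simp)), pd2_lift4 (ha.differentiable (by simp)),
        pd3_lift4 (ha.differentiable (by simp)), pd4_lift4 (ha.differentiable (by simp))]
      simp (config := { decide := true }) [Pi.single_apply, lift4_ext5, ext5_four, ← ha_def, ← hb_def, ← hc_def, ← hfx_def, ← hfy_def]
      try ring
    rw [hL0, hL1] at H
    exact H
  -- equation from g = y-coordinate (gives the ∂_x statement)
  have Ex : ∀ p : Fin 4 → ℝ,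
      (lift4 (pd 0 c) (ext5 p)) - b p * (lift4 (pd 3 c) (ext5 p))
        + a p * (lift4 (pd 2 c) (ext5 p)) - 0 * (lift4 (pd 3 c) (ext5 p))
        + fy p * 0
      - ((-lift4 (pd 1 b) (ext5 p) - 0) + c p * (-lift4 (pd 3 b) (ext5 p) - 0)
        - b p * (-lift4 (pd 2 b) (ext5 p) - 0) + 0 * (-lift4 (pd 2 b) (ext5 p) - 0)
        - fx p * (-0 - 1)) = 0 := by
    intro p
    have H := hcomm (fun q => q 3) (hcoord 3) (ext5 p)
    rw [e20, e21] at H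
    have hL0 : L0 Θ f (lift4 c) (ext5 p)
        = (lift4 (pd 0 c) (ext5 p)) - b p * (lift4 (pd 3 c) (ext5 p))
          + a p * (lift4 (pd 2 c) (ext5 p)) - 0 * (lift4 (pd 3 c) (ext5 p)) + fy p * 0 := by
      simp only [L0, pd0_lift4 (hc.differentiable (by simp)), pd2_lift4 (hc.differentiable (by simp)),
        pd3_lift4 (hc.differentiable (by simp)), pd4_lift4 (hc.differentiable (by simp))]
      simp (config := { decide := true }) [Pi.single_apply, lift4_ext5, ext5_four, ← ha_def, ← hb_def, ← hc_def, ← hfx_def, ← hfy_def]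
      try ring
    have hL1 : L1 Θ f (fun q => -lift4 b q - q 4) (ext5 p)
        = (-lift4 (pd 1 b) (ext5 p) - 0) + c p * (-lift4 (pd 3 b) (ext5 p) - 0)
          - b p * (-lift4 (pd 2 b) (ext5 p) - 0) + 0 * (-lift4 (pd 2 b) (ext5 p) - 0)
          - fx p * (-0 - 1) := by
      have hnb : Differentiable ℝ (fun q : Fin 5 → ℝ => -lift4 b q) := (dl hb).neg
      simp only [L1, pd_sub _ hnb hc4d, pd_neg, pd_coord,
        pd1_lift4 (hb.differentiable (by simp)), pd2_lift4 (hb.differentiable (by simp)),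
        pd3_lift4 (hb.differentiable (by simp)), pd4_lift4 (hb.differentiable (by simp))]
      simp (config := { decide := true }) [Pi.single_apply, lift4_ext5, ext5_four, ← ha_def, ← hb_def, ← hc_def, ← hfx_def, ← hfy_def]
      try ring
    rw [hL0, hL1] at H
    exact H
  -- equation from g = λ-coordinate (gives the f equation)
  have Ef : ∀ p : Fin 4 → ℝ,
      (-lift4 (pd 0 fx) (ext5 p)) - b p * (-lift4 (pd 3 fx) (ext5 p))
        + a p * (-lift4 (pd 2 fx) (ext5 p)) - 0 * (-lift4 (pd 3 fx) (ext5 p))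
        + fy p * (-0)
      - (lift4 (pd 1 fy) (ext5 p) + c p * lift4 (pd 3 fy) (ext5 p)
        - b p * lift4 (pd 2 fy) (ext5 p) + 0 * lift4 (pd 2 fy) (ext5 p)
        - fx p * 0) = 0 := by
    intro p
    have H := hcomm (fun q => q 4) (hcoord 4) (ext5 p)
    rw [e30, e31] at H
    have hL0 : L0 Θ f (fun q => -lift4 fx q) (ext5 p)
        = (-lift4 (pd 0 fx) (ext5 p)) - b p * (-lift4 (pd 3 fx) (ext5 p))
          + a p * (-lift4 (pd 2 fx) (ext5 p)) - 0 * (-lift4 (pd 3 fx) (ext5 p))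
          + fy p * (-0) := by
      simp only [L0, pd_neg, pd0_lift4 (hfx.differentiable (by simp)),
        pd2_lift4 (hfx.differentiable (by simp)), pd3_lift4 (hfx.differentiable (by simp)),
        pd4_lift4 (hfx.differentiable (by simp))]
      simp (config := { decide := true }) [Pi.single_apply, lift4_ext5, ext5_four, ← ha_def, ← hb_def, ← hc_def, ← hfx_def, ← hfy_def]
      try ring
    have hL1 : L1 Θ f (lift4 fy) (ext5 p)
        = lift4 (pd 1 fy) (ext5 p) + c p * lift4 (pd 3 fy) (ext5 p)
          - b p * lift4 (pd 2 fy) (ext5 p) + 0 * lift4 (pd 2 fy) (ext5 p) - fx p * 0 := by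
      simp only [L1, pd1_lift4 (hfy.differentiable (by simp)), pd2_lift4 (hfy.differentiable (by simp)),
        pd3_lift4 (hfy.differentiable (by simp)), pd4_lift4 (hfy.differentiable (by simp))]
      simp (config := { decide := true }) [Pi.single_apply, lift4_ext5, ext5_four, ← ha_def, ← hb_def, ← hc_def, ← hfx_def, ← hfy_def]
      try ring
    rw [hL0, hL1] at H
    exact H
  refine ⟨?_, ?_, ?_⟩
  · intro p
    have H := Ef p
    simp only [lift4_ext5] at H
    have k1 : pd 2 (pd 0 f) p = pd 0 fx p := pd_symm 2 0 hf p
    have k2 : pd 3 (pd 1 f) p = pd 1 fy p := pd_symm 3 1 hf p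
    have k3 : pd 3 fx p = pd 2 fy p := by rw [s4]
    rw [k1, k2]
    have k4 : pd 2 (pd 2 f) p = pd 2 fx p := rfl
    have k5 : pd 3 (pd 3 f) p = pd 3 fy p := rfl
    rw [k4, k5]
    rw [k3] at H
    linarith
  · intro p
    have H := Ex p
    simp only [lift4_ext5] at H
    have hexp : pd 2 (fun r => pd 0 (pd 2 Θ) r + pd 1 (pd 3 Θ) r
        + c r * a r - (b r) ^ 2 - f r) p
        = pd 2 (pd 0 (pd 2 Θ)) p + pd 2 (pd 1 (pd 3 Θ)) p
          + (pd 2 c p * a p + c p * pd 2 a p) - 2 * b p * pd 2 b p - pd 2 f p := by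
      have d1 : Differentiable ℝ (pd 0 (pd 2 Θ)) :=
        (pd_contDiff _ (pd_contDiff _ hΘ)).differentiable (by simp)
      have d2 : Differentiable ℝ (pd 1 (pd 3 Θ)) :=
        (pd_contDiff _ (pd_contDiff _ hΘ)).differentiable (by simp)
      have d3 : Differentiable ℝ (fun r => c r * a r) :=
        ((hc.differentiable (by simp)).mul (ha.differentiable (by simp)))
      have d4 : Differentiable ℝ (fun r => (b r) ^ 2) := (hb.differentiable (by simp)).pow 2
      have d12 : Differentiable ℝ (fun r => pd 0 (pd 2 Θ) r + pd 1 (pd 3 Θ) r) := d1.add d2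
      have d123 : Differentiable ℝ (fun r => pd 0 (pd 2 Θ) r + pd 1 (pd 3 Θ) r + c r * a r) :=
        d12.add d3
      have d1234 : Differentiable ℝ
          (fun r => pd 0 (pd 2 Θ) r + pd 1 (pd 3 Θ) r + c r * a r - (b r) ^ 2) :=
        d123.sub d4
      rw [pd_sub _ d1234 (hf.differentiable (by simp)), pd_sub _ d123 d4, pd_add _ d12 d3,
        pd_add _ d1 d2, pd_mul _ (hc.differentiable (by simp)) (ha.differentiable (by simp)),
        pd_pow2 _ (hb.differentiable (by simp))]
    rw [hexp]
    have k1 : pd 2 (pd 0 (pd 2 Θ)) p = pd 0 c p := pd_symm 2 0 (pd_contDiff _ hΘ) p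
    have k2 : pd 2 (pd 1 (pd 3 Θ)) p = pd 1 b p := pd_symm 2 1 (pd_contDiff _ hΘ) p
    have k3 : pd 2 a p = pd 3 b p := by rw [s2]
    have k4 : pd 3 c p = pd 2 b p := by rw [s3]
    rw [k1, k2, k3]
    rw [k4] at H
    linarith [H]
  · intro p
    have H := Ey p
    simp only [lift4_ext5] at H
    have hexp : pd 3 (fun r => pd 0 (pd 2 Θ) r + pd 1 (pd 3 Θ) r
        + c r * a r - (b r) ^ 2 - f r) p
        = pd 3 (pd 0 (pd 2 Θ)) p + pd 3 (pd 1 (pd 3 Θ)) p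
          + (pd 3 c p * a p + c p * pd 3 a p) - 2 * b p * pd 3 b p - pd 3 f p := by
      have d1 : Differentiable ℝ (pd 0 (pd 2 Θ)) :=
        (pd_contDiff _ (pd_contDiff _ hΘ)).differentiable (by simp)
      have d2 : Differentiable ℝ (pd 1 (pd 3 Θ)) :=
        (pd_contDiff _ (pd_contDiff _ hΘ)).differentiable (by simp)
      have d3 : Differentiable ℝ (fun r => c r * a r) :=
        ((hc.differentiable (by simp)).mul (ha.differentiable (by simp)))
      have d4 : Differentiable ℝ (fun r => (b r) ^ 2) := (hb.differentiable (by simp)).pow 2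
      have d12 : Differentiable ℝ (fun r => pd 0 (pd 2 Θ) r + pd 1 (pd 3 Θ) r) := d1.add d2
      have d123 : Differentiable ℝ (fun r => pd 0 (pd 2 Θ) r + pd 1 (pd 3 Θ) r + c r * a r) :=
        d12.add d3
      have d1234 : Differentiable ℝ
          (fun r => pd 0 (pd 2 Θ) r + pd 1 (pd 3 Θ) r + c r * a r - (b r) ^ 2) :=
        d123.sub d4
      rw [pd_sub _ d1234 (hf.differentiable (by simp)), pd_sub _ d123 d4, pd_add _ d12 d3,
        pd_add _ d1 d2, pd_mul _ (hc.differentiable (by simp)) (ha.differentiable (by simp)),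
        pd_pow2 _ (hb.differentiable (by simp))]
    rw [hexp]
    have k1 : pd 3 (pd 0 (pd 2 Θ)) p = pd 0 b p := by
      have h1 : pd 3 (pd 0 (pd 2 Θ)) p = pd 0 (pd 3 (pd 2 Θ)) p := pd_symm 3 0 (pd_contDiff _ hΘ) p
      rw [h1, s1, hb_def]
    have k2 : pd 3 (pd 1 (pd 3 Θ)) p = pd 1 a p := pd_symm 3 1 (pd_contDiff _ hΘ) p
    have k3 : pd 3 c p = pd 2 b p := by rw [s3]
    have k4 : pd 2 a p = pd 3 b p := by rw [s2]
    rw [k1, k2, k3]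
    rw [k4] at H
    linarith [H]
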